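/- arXiv:2008.11036 — 5 statements merged into one kernel-verified Lean document; each statement's English description precedes it below -/
import Mathlib

section
/- Let P, Q, R be three probability distributions on a finite set Z, with Q and R strictly positive on Z. Then for any γ ∈ (0, 1) and any α > 1, the following inequality holds: [d_α(P ‖ Q)]^(α−1) ≤ [d_{α/γ}(P ‖ R)]^(α−γ) · [d_{(α−γ)/(1−γ)}(R ‖ Q)]^(α−1). -/
open scoped BigOperators

/-- Exponential Rényi divergence `d_β(P ‖ Q)` between functions on a finite set. -/
noncomputable def expRenyi {Z : Type*} [Fintype Z] (β : ℝ) (P Q : Z → ℝ) : ℝ :=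
  (∑ z, P z ^ β / Q z ^ (β - 1)) ^ (1 / (β - 1))

/-!
Write `β₁ = α / γ` and `β₂ = (α - γ) / (1 - γ)`. Pointwise,
`P^α / Q^(α-1) = (P^β₁ / R^(β₁-1))^γ · (R^β₂ / Q^(β₂-1))^(1-γ)`, since the powers of `R` cancel.
Summing and applying Hölder's inequality with exponents `1/γ` and `1/(1-γ)` bounds the Rényi sum
of `(P, Q)` by the `γ`-th power of that of `(P, R)` times the `(1-γ)`-th power of that of `(R, Q)`,
which is the claim once the outer exponent `1/(β-1)` in `expRenyi` is undone.
-/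

open Real Finset

theorem sum_rpow_mul_rpow_le_of_nonneg {ι : Type*} (s : Finset ι) {a b : ι → ℝ}
    (ha : ∀ i ∈ s, 0 ≤ a i) (hb : ∀ i ∈ s, 0 ≤ b i) {γ : ℝ} (hγ0 : 0 < γ) (hγ1 : γ < 1) :
    ∑ i ∈ s, a i ^ γ * b i ^ (1 - γ) ≤ (∑ i ∈ s, a i) ^ γ * (∑ i ∈ s, b i) ^ (1 - γ) := by
  have hconj : HolderConjugate γ⁻¹ (1 - γ)⁻¹ :=
    (holderConjugate_iff_eq_conjExponent (one_lt_inv₀ hγ0 |>.mpr hγ1)).mpr (by field_simp)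
  have key := inner_le_Lp_mul_Lq_of_nonneg s hconj
    (fun i hi => rpow_nonneg (ha i hi) γ) (fun i hi => rpow_nonneg (hb i hi) (1 - γ))
  have h1γ : 1 - γ ≠ 0 := by linarith
  rwa [sum_congr rfl fun i hi => rpow_rpow_inv (ha i hi) hγ0.ne',
    sum_congr rfl fun i hi => rpow_rpow_inv (hb i hi) h1γ, one_div, inv_inv, one_div, inv_inv] at key

theorem rpow_div_rpow_rpow {x y : ℝ} (hx : 0 ≤ x) (hy : 0 ≤ y) (s t u : ℝ) :
    (x ^ s / y ^ t) ^ u = x ^ (s * u) / y ^ (t * u) := by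
  rw [div_rpow (rpow_nonneg hx s) (rpow_nonneg hy t), ← rpow_mul hx, ← rpow_mul hy]

theorem rpow_div_rpow_sub_one_eq_rpow_mul_rpow {p q r : ℝ} (hp : 0 ≤ p) (hq : 0 ≤ q) (hr : 0 < r)
    {α γ : ℝ} (hγ0 : γ ≠ 0) (hγ1 : γ ≠ 1) :
    p ^ α / q ^ (α - 1) =
      (p ^ (α / γ) / r ^ (α / γ - 1)) ^ γ *
        (r ^ ((α - γ) / (1 - γ)) / q ^ ((α - γ) / (1 - γ) - 1)) ^ (1 - γ) := by
  have h1γ : 1 - γ ≠ 0 := sub_ne_zero.mpr (Ne.symm hγ1)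
  rw [rpow_div_rpow_rpow hp hr.le, rpow_div_rpow_rpow hr.le hq,
    show α / γ * γ = α by field_simp, show (α / γ - 1) * γ = α - γ by field_simp,
    show (α - γ) / (1 - γ) * (1 - γ) = α - γ by field_simp,
    show ((α - γ) / (1 - γ) - 1) * (1 - γ) = α - 1 by field_simp; ring,
    div_mul_div_cancel₀ (rpow_pos_of_pos hr _).ne']

theorem expRenyi_rpow_mul_sub_one {Z : Type*} [Fintype Z] {P Q : Z → ℝ}
    (hP : ∀ z, 0 ≤ P z) (hQ : ∀ z, 0 ≤ Q z) {β : ℝ} (hβ : β ≠ 1) (t : ℝ) :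
    expRenyi β P Q ^ (t * (β - 1)) = (∑ z, P z ^ β / Q z ^ (β - 1)) ^ t := by
  have hsum : 0 ≤ ∑ z, P z ^ β / Q z ^ (β - 1) :=
    sum_nonneg fun z _ => div_nonneg (rpow_nonneg (hP z) _) (rpow_nonneg (hQ z) _)
  have hβ1 : β - 1 ≠ 0 := sub_ne_zero.mpr hβ
  rw [expRenyi, ← rpow_mul hsum, show 1 / (β - 1) * (t * (β - 1)) = t by field_simp]

theorem renyi_triangle_inequality_general {Z : Type*} [Fintype Z]
    (P Q R : Z → ℝ)
    (hP : ∀ z, 0 ≤ P z)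
    (hQpos : ∀ z, 0 < Q z)
    (hRpos : ∀ z, 0 < R z)
    (γ : ℝ) (hγ0 : 0 < γ) (hγ1 : γ < 1)
    (α : ℝ) (hα : 1 < α) :
    expRenyi α P Q ^ (α - 1) ≤
      expRenyi (α / γ) P R ^ (α - γ) *
        expRenyi ((α - γ) / (1 - γ)) R Q ^ (α - 1) := by
  have hQ z := (hQpos z).le
  have hR z := (hRpos z).le
  have h1γ : 0 < 1 - γ := by linarith
  have hPQ := expRenyi_rpow_mul_sub_one hP hQ hα.ne' 1
  have hPR := expRenyi_rpow_mul_sub_one hP hR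
    (β := α / γ) (one_lt_div hγ0 |>.mpr (by linarith)).ne' γ
  have hRQ := expRenyi_rpow_mul_sub_one hR hQ
    (β := (α - γ) / (1 - γ)) (one_lt_div h1γ |>.mpr (by linarith)).ne' (1 - γ)
  rw [one_mul, rpow_one] at hPQ
  rw [show γ * (α / γ - 1) = α - γ by field_simp] at hPR
  rw [show (1 - γ) * ((α - γ) / (1 - γ) - 1) = α - 1 by field_simp; ring] at hRQ
  rw [hPQ, hPR, hRQ, sum_congr rfl fun z _ =>
    rpow_div_rpow_sub_one_eq_rpow_mul_rpow (hP z) (hQ z) (hRpos z) hγ0.ne' hγ1.ne]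
  exact sum_rpow_mul_rpow_le_of_nonneg univ
    (fun z _ => div_nonneg (rpow_nonneg (hP z) _) (rpow_nonneg (hR z) _))
    (fun z _ => div_nonneg (rpow_nonneg (hR z) _) (rpow_nonneg (hQ z) _)) hγ0 hγ1

/-- Triangle-type inequality for exponential Rényi divergences
(Proposition 2 of the paper, with α > 1). -/
theorem renyi_triangle_inequality {Z : Type*} [Fintype Z] [Nonempty Z]
    (P Q R : Z → ℝ)
    (hP : ∀ z, 0 ≤ P z) (hPsum : ∑ z, P z = 1)
    (hQpos : ∀ z, 0 < Q z) (hQsum : ∑ z, Q z = 1)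
    (hRpos : ∀ z, 0 < R z) (hRsum : ∑ z, R z = 1)
    (γ : ℝ) (hγ0 : 0 < γ) (hγ1 : γ < 1)
    (α : ℝ) (hα : 1 < α) :
    expRenyi α P Q ^ (α - 1) ≤
      expRenyi (α / γ) P R ^ (α - γ) *
        expRenyi ((α - γ) / (1 - γ)) R Q ^ (α - 1) :=
  renyi_triangle_inequality_general P Q R hP hQpos hRpos γ hγ0 hγ1 α hα
end

section
/- In the regression model, the generative distribution-weighted predictor built from the induced density estimates coincides with the discriminative distribution-weighted predictor after a reparameterization of the mixture weights. Precisely: for any z ∈ Δ, defining z'_k = (z_k / Q̂(k)) / (Σ_{j=1}^p z_j / Q̂(j)) for all k ∈ [p], one has ĥ_z(x) = ĝ_{z'}(x) for every x ∈ X, where ĥ_z is the generative combination using the density estimates D̂_k(x) = Q̂(k|x) D(x) / Q̂(k). -/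
open scoped BigOperators

/-! Substituting `D̂_k(x) = Q̂(k|x) D(x) / Q̂(k)` and `z_k / Q̂(k) = S z'_k`, with
`S = Σ_j z_j / Q̂(j) > 0`, every generative weight `z_k D̂_k(x)` equals `S D(x) z'_k Q̂(k|x)`.
The common positive factor `S D(x)` cancels in the normalization. -/

theorem sum_normalized_mul_const_mul {ι : Type*} [Fintype ι] (c : ℝ) (hc : c ≠ 0)
    (w f : ι → ℝ) :
    ∑ k, (c * w k / ∑ j, c * w j) * f k = ∑ k, (w k / ∑ j, w j) * f k := by
  simp only [← Finset.mul_sum, mul_div_mul_left _ _ hc]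

theorem sum_div_pos_of_mem_stdSimplex {ι : Type*} [Fintype ι] {z : ι → ℝ}
    (hz : z ∈ stdSimplex ℝ ι) {q : ι → ℝ} (hq : ∀ k, 0 < q k) :
    0 < ∑ j, z j / q j := by
  obtain ⟨k, -, hk⟩ : ∃ k ∈ Finset.univ, (0 : ι → ℝ) k < z k :=
    Finset.exists_lt_of_sum_lt (by simp [hz.2])
  exact Finset.sum_pos' (fun j _ => div_nonneg (hz.1 j) (hq j).le)
    ⟨k, Finset.mem_univ k, div_pos hk (hq k)⟩

theorem gmsa_eq_dmsa_regression_general {X : Type*} [Fintype X] {p : ℕ}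
    (D : X → ℝ) (hDpos : ∀ x, 0 < D x)
    (h : Fin p → X → ℝ)
    (Qc : Fin p → X → ℝ)
    (Qk : Fin p → ℝ)
    (hQkpos : ∀ k, 0 < Qk k)
    (Dhat : Fin p → X → ℝ) (hDhat : ∀ k x, Dhat k x = Qc k x * D x / Qk k)
    (z : Fin p → ℝ) (hz : z ∈ stdSimplex ℝ (Fin p))
    (z' : Fin p → ℝ)
    (hz' : ∀ k, z' k = (z k / Qk k) / ∑ j, z j / Qk j) :
    ∀ x : X,
      (∑ k, (z k * Dhat k x / ∑ j, z j * Dhat j x) * h k x) =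
        ∑ k, (z' k * Qc k x / ∑ j, z' j * Qc j x) * h k x := by
  intro x
  have hS := sum_div_pos_of_mem_stdSimplex hz hQkpos
  have hweight : ∀ k, z k * Dhat k x =
      ((∑ j, z j / Qk j) * D x) * (z' k * Qc k x) := by
    intro k
    rw [hDhat, hz']
    field_simp [(hQkpos k).ne']
  simp only [hweight]
  exact sum_normalized_mul_const_mul _ (mul_pos hS (hDpos x)).ne' _ _

/-- In the regression model, the generative distribution-weighted predictor built
from the induced density estimates `D̂_k(x) = Q̂(k|x) D(x) / Q̂(k)` coincides with
the discriminative distribution-weighted predictor after reparameterizing the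
mixture weights (Proposition 1 of the paper, regression model). -/
theorem gmsa_eq_dmsa_regression {X : Type*} [Fintype X] {p : ℕ}
    (D : X → ℝ) (hDpos : ∀ x, 0 < D x) (hDsum : ∑ x, D x = 1)
    (h : Fin p → X → ℝ)
    (Qc : Fin p → X → ℝ) (hQc : ∀ k x, 0 < Qc k x)
    (Qk : Fin p → ℝ) (hQkdef : ∀ k, Qk k = ∑ x, Qc k x * D x)
    (hQkpos : ∀ k, 0 < Qk k)
    (Dhat : Fin p → X → ℝ) (hDhat : ∀ k x, Dhat k x = Qc k x * D x / Qk k)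
    (z : Fin p → ℝ) (hz : z ∈ stdSimplex ℝ (Fin p))
    (z' : Fin p → ℝ)
    (hz' : ∀ k, z' k = (z k / Qk k) / ∑ j, z j / Qk j) :
    ∀ x : X,
      (∑ k, (z k * Dhat k x / ∑ j, z j * Dhat j x) * h k x) =
        ∑ k, (z' k * Qc k x / ∑ j, z' j * Qc j x) * h k x :=
  gmsa_eq_dmsa_regression_general D hDpos h Qc Qk hQkpos Dhat hDhat z hz z' hz'
end

section
/- In the probability model, the generative distribution-weighted predictor built from the induced density estimates coincides with the discriminative distribution-weighted predictor after a reparameterization of the mixture weights. Precisely: for any z ∈ Δ, defining z'_k = (z_k / Q̂(k)) / (Σ_{j=1}^p z_j / Q̂(j)) for all k ∈ [p], one has ĥ_z(x, y) = ĝ_{z'}(x, y) for every (x, y) ∈ X × Y, where ĥ_z is the generative combination using the density estimates D̂_k(x) = Q̂(k|x) D(x) / Q̂(k). -/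
open scoped BigOperators

/-- In the probability model, the generative distribution-weighted predictor built
from the induced density estimates `D̂_k(x) = Q̂(k|x) D(x) / Q̂(k)` coincides with
the discriminative distribution-weighted predictor after reparameterizing the
mixture weights (Proposition 1 of the paper, probability model). -/
theorem gmsa_eq_dmsa_probability {X Y : Type*} [Fintype X] [Fintype Y] {p : ℕ}
    (D : X → ℝ) (hDpos : ∀ x, 0 < D x) (hDsum : ∑ x, D x = 1)
    (h : Fin p → X → Y → ℝ)
    (hh0 : ∀ k x y, 0 ≤ h k x y) (hh1 : ∀ k x y, h k x y ≤ 1)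
    (hhsum : ∀ k x, ∑ y, h k x y = 1)
    (Qc : Fin p → X → ℝ) (hQc : ∀ k x, 0 < Qc k x)
    (Qk : Fin p → ℝ) (hQkdef : ∀ k, Qk k = ∑ x, Qc k x * D x)
    (hQkpos : ∀ k, 0 < Qk k)
    (Dhat : Fin p → X → ℝ) (hDhat : ∀ k x, Dhat k x = Qc k x * D x / Qk k)
    (z : Fin p → ℝ) (hz : z ∈ stdSimplex ℝ (Fin p))
    (z' : Fin p → ℝ)
    (hz' : ∀ k, z' k = (z k / Qk k) / ∑ j, z j / Qk j) :
    ∀ (x : X) (y : Y),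
      (∑ k, (z k * Dhat k x / ∑ j, z j * Dhat j x) * h k x y) =
        ∑ k, (z' k * Qc k x / ∑ j, z' j * Qc j x) * h k x y := by
  intro x y
  obtain ⟨hz0, hz1⟩ := hz
  -- some coordinate of z is positive
  obtain ⟨j₀, hj₀⟩ : ∃ j, 0 < z j := by
    by_contra hc
    push_neg at hc
    have : ∑ j, z j = 0 := Finset.sum_eq_zero fun j _ => le_antisymm (hc j) (hz0 j)
    rw [hz1] at this; norm_num at this
  set S : ℝ := ∑ j, z j / Qk j with hS
  have hSpos : 0 < S := by
    apply Finset.sum_pos' (fun j _ => div_nonneg (hz0 j) (hQkpos j).le)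
    exact ⟨j₀, Finset.mem_univ j₀, div_pos hj₀ (hQkpos j₀)⟩
  set T : ℝ := ∑ j, z j * Qc j x / Qk j with hT
  have hTpos : 0 < T := by
    apply Finset.sum_pos' (fun j _ => div_nonneg (mul_nonneg (hz0 j) (hQc j x).le) (hQkpos j).le)
    exact ⟨j₀, Finset.mem_univ j₀, div_pos (mul_pos hj₀ (hQc j₀ x)) (hQkpos j₀)⟩
  have hden1 : (∑ j, z j * Dhat j x) = T * D x := by
    rw [hT, Finset.sum_mul]
    apply Finset.sum_congr rfl
    intro j _
    rw [hDhat]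
    field_simp
  have hden2 : (∑ j, z' j * Qc j x) = T / S := by
    rw [hT, Finset.sum_div]
    apply Finset.sum_congr rfl
    intro j _
    rw [hz']
    field_simp
  apply Finset.sum_congr rfl
  intro k _
  congr 1
  rw [hden1, hden2, hDhat, hz']
  have hD := (hDpos x).ne'
  have hQ := (hQkpos k).ne'
  field_simp
end

section
/- DMSA finite-sample guarantee with conditional Maxent (Theorem 5): there exists z ∈ Δ such that for any δ > 0, with probability at least 1 − δ over the i.i.d. draw of a sample of size m from Q used to train conditional Maxent, the discriminative distribution-weighted predictor ĝ_z (built from the conditional Maxent estimates Q̂(k|x) = p_ŵ[k|x]) satisfies, for any target distribution D_T in the convex hull of the source distributions: L(D_T, ĝ_z) ≤ ε · p · exp( (6√2 r²)/(μ√m) · (1 + √(log(1/δ))) ) · d* · d'*, where d* = sup_{x ∈ X} d_∞( Q*[·|x] ‖ Q(·|x) ) and d'* = sup_{x ∈ X} d_∞( Q(·|x) ‖ Q*[·|x] )², with Q*(·|x) = p_{w*}[·|x] the population conditional Maxent solution. -/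
/-!
Take the uniform weights `z = (1/p, …, 1/p)`, so that `ĝ_z(x) = Σ_k Q̂(k|x) h_k(x)`. By Jensen's
inequality and `Σ_k λ_k D_k ≤ Σ_k D_k`, the loss of such a combination on any mixture `D_λ` is at
most `B · Σ_k L(D_k, h_k) ≤ B p ε` as soon as `Q̂(k|x) ≤ B · Q(k|x)`. The log-partition
function of conditional Maxent is `r`-Lipschitz in `w`, whence
`Q̂ ≤ exp(2r ‖ŵ - w*‖) Q* ≤ exp(2r ‖ŵ - w*‖) d* Q`; and `d'* ≥ 1` because `Q(·|x)` and `Q*(·|x)`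
are both probability vectors.

It remains to bound `‖ŵ - w*‖` with high probability. Regularized empirical risk minimization
with a convex, `2r`-Lipschitz loss is uniformly stable: by the quadratic growth of
`μ ‖·‖² + (convex)` around its minimizer, replacing one sample point moves `ŵ` by at most
`2r / (μ m)`. Stability bounds the expected generalization gap, which gives
`E ‖ŵ - w*‖² ≤ 2 r² / (μ² m)`, and McDiarmid's inequality (a Chernoff bound on the martingale of
conditional expectations, with Hoeffding's lemma at each step) turns the bounded differences of
`S ↦ ‖ŵ_S - w*‖` into `‖ŵ - w*‖ ≤ 3√2 r / (μ √m) · (1 + √(log (1/δ)))` with probability `≥ 1 - δ`.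
-/

open scoped BigOperators RealInnerProductSpace

attribute [local instance] Classical.propDecidable

/-- Conditional Maxent (multinomial logistic regression) model:
`p_w[k | x] = exp(w · Φ(x, k)) / Σ_j exp(w · Φ(x, j))`. -/
noncomputable def condMaxent {X : Type*} {p N : ℕ}
    (Φ : X × Fin p → EuclideanSpace ℝ (Fin N))
    (w : EuclideanSpace ℝ (Fin N)) (v : X × Fin p) : ℝ :=
  Real.exp ⟪w, Φ v⟫ / ∑ j, Real.exp ⟪w, Φ (v.1, j)⟫

/-- Distribution-weighted combination of the predictors `h k` with weights
proportional to `z k * W k x`. -/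
noncomputable def weightedComb {X : Type*} {p : ℕ} [Fintype X]
    (W : Fin p → X → ℝ) (h : Fin p → X → ℝ) (z : Fin p → ℝ) (x : X) : ℝ :=
  ∑ k, (z k * W k x / ∑ j, z j * W j x) * h k x

/-- Expected loss `L(D, g) = E_{(x,y)∼D}[ℓ(g(x), y)]` on a finite space. -/
noncomputable def expLoss {X Y : Type*} [Fintype X] [Fintype Y]
    (ℓ : ℝ → Y → ℝ) (D : X × Y → ℝ) (g : X → ℝ) : ℝ :=
  ∑ v : X × Y, D v * ℓ (g v.1) v.2

/-- Probability, under i.i.d. sampling of `m` points from the finite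
distribution `Qf`, of the set of samples satisfying `E`. -/
noncomputable def sampleProb {Z : Type*} [Fintype Z] (m : ℕ) (Qf : Z → ℝ)
    (E : (Fin m → Z) → Prop) : ℝ :=
  ∑ S : Fin m → Z, if E S then ∏ i, Qf (S i) else 0

open Finset Real Filter Topology

section Convexity

lemma convexOn_sum_mul {F ι : Type*} [AddCommGroup F] [Module ℝ F] (s : Finset ι) {a : ι → ℝ}
    (ha : ∀ i, 0 ≤ a i) {f : ι → F → ℝ} (hf : ∀ i, ConvexOn ℝ Set.univ (f i)) :
    ConvexOn ℝ Set.univ (fun w => ∑ i ∈ s, a i * f i w) := by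
  have h := sum_induction (s := s) (fun i w => a i * f i w) (ConvexOn ℝ Set.univ)
    (fun _ _ => ConvexOn.add) (convexOn_const 0 convex_univ)
    fun i _ => by simpa only [smul_eq_mul] using (hf i).smul (ha i)
  convert h using 1
  funext w
  rw [Finset.sum_apply]

lemma sum_rpow_mul_rpow_le {ι : Type*} [Fintype ι] [Nonempty ι] {u v : ι → ℝ}
    (hu : ∀ i, 0 < u i) (hv : ∀ i, 0 < v i) {a b : ℝ} (ha : 0 ≤ a) (hb : 0 ≤ b) (hab : a + b = 1) :
    ∑ i, u i ^ a * v i ^ b ≤ (∑ i, u i) ^ a * (∑ i, v i) ^ b := by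
  set A := ∑ i, u i
  set B := ∑ i, v i
  have hA : 0 < A := sum_pos (fun i _ => hu i) univ_nonempty
  have hB : 0 < B := sum_pos (fun i _ => hv i) univ_nonempty
  have hterm (i : ι) :
      u i ^ a * v i ^ b ≤ (a * (u i / A) + b * (v i / B)) * (A ^ a * B ^ b) := by
    calc u i ^ a * v i ^ b = (u i / A) ^ a * (v i / B) ^ b * (A ^ a * B ^ b) := by
          rw [div_rpow (hu i).le hA.le, div_rpow (hv i).le hB.le]
          field_simp
      _ ≤ _ := mul_le_mul_of_nonneg_right (geom_mean_le_arith_mean2_weighted ha hb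
          (div_nonneg (hu i).le hA.le) (div_nonneg (hv i).le hB.le) hab) (by positivity)
  calc ∑ i, u i ^ a * v i ^ b ≤ ∑ i, (a * (u i / A) + b * (v i / B)) * (A ^ a * B ^ b) :=
        sum_le_sum fun i _ => hterm i
    _ = A ^ a * B ^ b := by
        rw [← sum_mul, sum_add_distrib, ← mul_sum, ← mul_sum, ← sum_div, ← sum_div,
          div_self hA.ne', div_self hB.ne', mul_one, mul_one, hab, one_mul]

variable {E : Type*} [NormedAddCommGroup E] [InnerProductSpace ℝ E]

lemma convexOn_log_sum_exp_inner {ι : Type*} [Fintype ι] [Nonempty ι] (c : ι → E) :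
    ConvexOn ℝ Set.univ (fun w : E => log (∑ j, exp ⟪w, c j⟫)) := by
  refine ⟨convex_univ, fun w₁ _ w₂ _ a b ha hb hab => ?_⟩
  have hpos (w : E) : 0 < ∑ j, exp ⟪w, c j⟫ := sum_pos (fun j _ => exp_pos _) univ_nonempty
  have hexp (j : ι) : exp ⟪a • w₁ + b • w₂, c j⟫ = exp ⟪w₁, c j⟫ ^ a * exp ⟪w₂, c j⟫ ^ b := by
    rw [inner_add_left, real_inner_smul_left, real_inner_smul_left, ← exp_mul, ← exp_mul,
      ← exp_add]
    ring_nf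
  simp only [hexp, smul_eq_mul]
  calc log (∑ j, exp ⟪w₁, c j⟫ ^ a * exp ⟪w₂, c j⟫ ^ b)
      ≤ log ((∑ j, exp ⟪w₁, c j⟫) ^ a * (∑ j, exp ⟪w₂, c j⟫) ^ b) :=
        log_le_log (sum_pos (fun j _ => by positivity) univ_nonempty)
          (sum_rpow_mul_rpow_le (fun j => exp_pos _) (fun j => exp_pos _) ha hb hab)
    _ = a * log (∑ j, exp ⟪w₁, c j⟫) + b * log (∑ j, exp ⟪w₂, c j⟫) := by
        rw [log_mul (rpow_pos_of_pos (hpos w₁) a).ne' (rpow_pos_of_pos (hpos w₂) b).ne',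
          log_rpow (hpos w₁), log_rpow (hpos w₂)]

def IsRegMinimizer (μ : ℝ) (G : E → ℝ) (w₀ : E) : Prop :=
  ∀ w, μ * ‖w₀‖ ^ 2 + G w₀ ≤ μ * ‖w‖ ^ 2 + G w

lemma ConvexOn.quadratic_growth {G : E → ℝ} (hG : ConvexOn ℝ Set.univ G) {μ : ℝ} {w₀ : E}
    (hmin : IsRegMinimizer μ G w₀) (w : E) :
    μ * ‖w₀‖ ^ 2 + G w₀ + μ * ‖w - w₀‖ ^ 2 ≤ μ * ‖w‖ ^ 2 + G w := by
  set d := w - w₀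
  -- compare `w₀` with the points `w₀ + t d` of the segment and let `t → 0⁺`
  have hstep : ∀ t ∈ Set.Ioc (0 : ℝ) 1,
      G w₀ ≤ 2 * μ * ⟪w₀, d⟫ + G w + t * (μ * ‖d‖ ^ 2) := by
    rintro t ⟨ht0, ht1⟩
    have hsegment : G (w₀ + t • d) ≤ (1 - t) * G w₀ + t * G w := by
      have h := hG.2 (Set.mem_univ w₀) (Set.mem_univ w) (sub_nonneg.2 ht1) ht0.le
        (sub_add_cancel 1 t)
      have hpoint : (1 - t) • w₀ + t • w = w₀ + t • d := by
        simp only [d, smul_sub, sub_smul, one_smul]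
        abel
      rwa [hpoint, smul_eq_mul, smul_eq_mul] at h
    have hnorm : ‖w₀ + t • d‖ ^ 2 = ‖w₀‖ ^ 2 + 2 * t * ⟪w₀, d⟫ + t ^ 2 * ‖d‖ ^ 2 := by
      rw [norm_add_sq_real, real_inner_smul_right, norm_smul, mul_pow, norm_eq_abs, sq_abs]
      ring
    have h := hmin (w₀ + t • d)
    rw [hnorm] at h
    refine le_of_mul_le_mul_left ?_ ht0
    nlinarith
  have hlim : Tendsto (fun t : ℝ => 2 * μ * ⟪w₀, d⟫ + G w + t * (μ * ‖d‖ ^ 2)) (𝓝[>] 0)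
      (𝓝 (2 * μ * ⟪w₀, d⟫ + G w)) := by
    have h : Continuous fun t : ℝ => 2 * μ * ⟪w₀, d⟫ + G w + t * (μ * ‖d‖ ^ 2) := by fun_prop
    simpa using (h.tendsto 0).mono_left nhdsWithin_le_nhds
  have hfirst := ge_of_tendsto hlim (eventually_of_mem (Ioc_mem_nhdsGT one_pos) hstep)
  have hw : ‖w‖ ^ 2 = ‖w₀‖ ^ 2 + 2 * ⟪w₀, d⟫ + ‖d‖ ^ 2 := by
    rw [← norm_add_sq_real, add_sub_cancel]
  rw [hw]
  linear_combination hfirst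

end Convexity

lemma log_sum_exp_sub_le {ι : Type*} [Fintype ι] [Nonempty ι] {x y : ι → ℝ} {c : ℝ}
    (h : ∀ j, x j - y j ≤ c) : log (∑ j, exp (x j)) - log (∑ j, exp (y j)) ≤ c := by
  have hpos (z : ι → ℝ) : 0 < ∑ j, exp (z j) := sum_pos (fun j _ => exp_pos _) univ_nonempty
  have hle : ∑ j, exp (x j) ≤ exp c * ∑ j, exp (y j) := by
    rw [mul_sum]
    exact sum_le_sum fun j _ => by
      rw [← exp_add]
      exact exp_le_exp.2 (by linarith [h j])
  have hlog := log_le_log (hpos x) hle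
  rw [log_mul (exp_pos c).ne' (hpos y).ne', log_exp] at hlog
  linarith

lemma one_le_iSup_div {ι : Type*} [Fintype ι] [Nonempty ι] {P R : ι → ℝ} (hR : ∀ i, 0 < R i)
    (hsum : ∑ i, R i ≤ ∑ i, P i) : 1 ≤ ⨆ i, P i / R i := by
  obtain ⟨i, -, hi⟩ := exists_le_of_sum_le univ_nonempty hsum
  exact ((one_le_div (hR i)).2 hi).trans
    (le_ciSup (f := fun i => P i / R i) (Set.finite_range _).bddAbove i)

namespace DMSA

section Sampling

variable {Z : Type*} [Fintype Z] {m : ℕ} {q : Z → ℝ}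

noncomputable def sampleExpect (m : ℕ) (q : Z → ℝ) (F : (Fin m → Z) → ℝ) : ℝ :=
  ∑ S : Fin m → Z, (∏ i, q (S i)) * F S

lemma sum_prod_eq_one (hq1 : ∑ z, q z = 1) : ∑ S : Fin m → Z, ∏ i, q (S i) = 1 := by
  rw [← Fintype.prod_sum]
  simp [hq1]

lemma sampleExpect_const (hq1 : ∑ z, q z = 1) (c : ℝ) : sampleExpect m q (fun _ => c) = c := by
  rw [sampleExpect, ← sum_mul, sum_prod_eq_one hq1, one_mul]

lemma sampleExpect_mono (hq0 : ∀ z, 0 ≤ q z) {F G : (Fin m → Z) → ℝ} (h : ∀ S, F S ≤ G S) :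
    sampleExpect m q F ≤ sampleExpect m q G :=
  sum_le_sum fun S _ => mul_le_mul_of_nonneg_left (h S) (prod_nonneg fun _ _ => hq0 _)

lemma sampleExpect_add (F G : (Fin m → Z) → ℝ) :
    sampleExpect m q (fun S => F S + G S) = sampleExpect m q F + sampleExpect m q G := by
  simp only [sampleExpect, mul_add, sum_add_distrib]

lemma sampleExpect_sub (F G : (Fin m → Z) → ℝ) :
    sampleExpect m q (fun S => F S - G S) = sampleExpect m q F - sampleExpect m q G := by
  simp only [sampleExpect, mul_sub, sum_sub_distrib]

lemma sampleExpect_const_mul (c : ℝ) (F : (Fin m → Z) → ℝ) :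
    sampleExpect m q (fun S => c * F S) = c * sampleExpect m q F := by
  simp only [sampleExpect, mul_sum, mul_left_comm]

lemma sampleExpect_sum {ι : Type*} (s : Finset ι) (F : ι → (Fin m → Z) → ℝ) :
    sampleExpect m q (fun S => ∑ i ∈ s, F i S) = ∑ i ∈ s, sampleExpect m q (F i) := by
  simp only [sampleExpect, mul_sum]
  exact sum_comm

lemma sampleExpect_succ (F : (Fin (m + 1) → Z) → ℝ) :
    sampleExpect (m + 1) q F = ∑ z, q z * sampleExpect m q (fun T => F (Fin.cons z T)) := by
  rw [sampleExpect, ← (Fin.consEquiv fun _ => Z).sum_comp, Fintype.sum_prod_type]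
  simp [sampleExpect, Fin.prod_univ_succ, mul_sum, mul_assoc]
  rfl

/-- Exchanging the `i`-th sample point with an independent fresh point preserves the law. -/
lemma sampleExpect_sum_update (i : Fin m) (F : (Fin m → Z) → Z → ℝ) :
    sampleExpect m q (fun S => ∑ z, q z * F S z) =
      sampleExpect m q (fun S => ∑ z, q z * F (Function.update S i z) (S i)) := by
  have hswap : Function.Involutive
      fun P : (Fin m → Z) × Z => (Function.update P.1 i P.2, P.1 i) :=
    fun P => by simp
  have hweight (S : Fin m → Z) (z : Z) :
      (∏ j, q (Function.update S i z j)) * q (S i) = (∏ j, q (S j)) * q z := by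
    rw [← mul_prod_erase univ _ (mem_univ i), ← mul_prod_erase univ (fun j => q (S j)) (mem_univ i),
      Function.update_self,
      prod_congr rfl fun j hj => by rw [Function.update_of_ne (ne_of_mem_erase hj)]]
    ring
  simp only [sampleExpect, mul_sum, ← mul_assoc]
  rw [← Fintype.sum_prod_type', ← Fintype.sum_prod_type']
  refine (Fintype.sum_equiv hswap.toPerm _ _ fun P => ?_).symm
  simp only [Function.Involutive.coe_toPerm]
  rw [hweight]

lemma sampleExpect_apply (hq1 : ∑ z, q z = 1) (i : Fin m) (g : Z → ℝ) :
    sampleExpect m q (fun S => g (S i)) = ∑ z, q z * g z := by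
  have h := sampleExpect_sum_update (q := q) i fun _ z => g z
  simp only [← sum_mul, hq1, one_mul, sampleExpect_const hq1] at h
  exact h.symm

lemma sq_sampleExpect_le (hq0 : ∀ z, 0 ≤ q z) (hq1 : ∑ z, q z = 1) (F : (Fin m → Z) → ℝ) :
    sampleExpect m q F ^ 2 ≤ sampleExpect m q (fun S => F S ^ 2) := by
  simpa [sampleExpect, smul_eq_mul] using (even_two.convexOn_pow (𝕜 := ℝ)).map_sum_le
    (t := univ) (w := fun S : Fin m → Z => ∏ i, q (S i)) (p := F)
    (fun S _ => prod_nonneg fun i _ => hq0 _) (sum_prod_eq_one hq1) (fun S _ => Set.mem_univ _)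

lemma sampleProb_mono (hq0 : ∀ z, 0 ≤ q z) {E E' : (Fin m → Z) → Prop} (h : ∀ S, E S → E' S) :
    sampleProb m q E ≤ sampleProb m q E' := by
  refine sum_le_sum fun S _ => ?_
  by_cases hS : E S
  · simp [hS, h S hS]
  · simpa [hS] using ite_nonneg (prod_nonneg fun i _ => hq0 (S i)) le_rfl

lemma sampleProb_le_sampleExpect (hq0 : ∀ z, 0 ≤ q z) {E : (Fin m → Z) → Prop}
    {F : (Fin m → Z) → ℝ} (hF0 : ∀ S, 0 ≤ F S) (hF : ∀ S, E S → 1 ≤ F S) :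
    sampleProb m q E ≤ sampleExpect m q F := by
  refine sum_le_sum fun S _ => ?_
  have hw : 0 ≤ ∏ i, q (S i) := prod_nonneg fun i _ => hq0 (S i)
  split_ifs with hS
  · exact le_mul_of_one_le_right hw (hF S hS)
  · exact mul_nonneg hw (hF0 S)

lemma one_sub_sampleProb_le (hq0 : ∀ z, 0 ≤ q z) (hq1 : ∑ z, q z = 1)
    {B E : (Fin m → Z) → Prop} (h : ∀ S, ¬ B S → E S) :
    1 - sampleProb m q B ≤ sampleProb m q E := by
  suffices ∑ S : Fin m → Z, ∏ i, q (S i) ≤ sampleProb m q B + sampleProb m q E by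
    rw [sum_prod_eq_one hq1] at this
    linarith
  rw [sampleProb, sampleProb, ← sum_add_distrib]
  refine sum_le_sum fun S _ => ?_
  have hw : 0 ≤ ∏ i, q (S i) := prod_nonneg fun i _ => hq0 (S i)
  by_cases hS : B S
  · simpa [hS] using ite_nonneg hw le_rfl
  · simp [hS, h S hS]

end Sampling

section Concentration

variable {Z : Type*} [Fintype Z] {q : Z → ℝ}

lemma exp_mul_le_cosh_add_sinh {c y : ℝ} (hc : 0 < c) (hy : |y| ≤ c) (t : ℝ) :
    exp (t * y) ≤ cosh (t * c) + y / c * sinh (t * c) := by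
  obtain ⟨hyl, hyu⟩ := abs_le.1 hy
  have hchord := convexOn_exp.2 (Set.mem_univ (t * c)) (Set.mem_univ (-(t * c)))
    (div_nonneg (by linarith : 0 ≤ c + y) (by positivity : 0 ≤ 2 * c))
    (div_nonneg (by linarith : 0 ≤ c - y) (by positivity : 0 ≤ 2 * c))
    (by field_simp; ring)
  simp only [smul_eq_mul] at hchord
  calc exp (t * y) = exp ((c + y) / (2 * c) * (t * c) + (c - y) / (2 * c) * -(t * c)) := by
        congr 1
        field_simp
        ring
    _ ≤ _ := hchord
    _ = cosh (t * c) + y / c * sinh (t * c) := by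
        rw [cosh_eq, sinh_eq]
        field_simp
        ring

/-- Hoeffding's lemma, with the constant of the symmetric range `[-c, c]`. -/
lemma sum_mul_exp_le_of_abs_le (hq0 : ∀ z, 0 ≤ q z) (hq1 : ∑ z, q z = 1) {Y : Z → ℝ} {c : ℝ}
    (hc : 0 < c) (hY : ∀ z, |Y z| ≤ c) (hmean : ∑ z, q z * Y z = 0) (t : ℝ) :
    ∑ z, q z * exp (t * Y z) ≤ exp (t ^ 2 * c ^ 2 / 2) :=
  calc ∑ z, q z * exp (t * Y z)
      ≤ ∑ z, q z * (cosh (t * c) + Y z / c * sinh (t * c)) := sum_le_sum fun z _ =>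
        mul_le_mul_of_nonneg_left (exp_mul_le_cosh_add_sinh hc (hY z) t) (hq0 z)
    _ = cosh (t * c) := by
        simp only [mul_add, sum_add_distrib, ← sum_mul, hq1, one_mul, div_mul_eq_mul_div,
          mul_div_assoc', ← sum_div]
        simp only [← mul_assoc, ← sum_mul, hmean, zero_mul, zero_div, add_zero]
    _ ≤ exp (t ^ 2 * c ^ 2 / 2) := by
        rw [← mul_pow]
        exact cosh_le_exp_half_sq _

lemma abs_sub_sum_mul_le (hq0 : ∀ z, 0 ≤ q z) (hq1 : ∑ z, q z = 1) {g : Z → ℝ} {c : ℝ}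
    (hg : ∀ z z', g z - g z' ≤ c) (z : Z) : |g z - ∑ z', q z' * g z'| ≤ c := by
  have hdev : g z - ∑ z', q z' * g z' = ∑ z', q z' * (g z - g z') := by
    simp only [mul_sub, sum_sub_distrib, ← sum_mul, hq1, one_mul]
  have hmass (a : ℝ) : ∑ z' : Z, q z' * a = a := by rw [← sum_mul, hq1, one_mul]
  rw [hdev, abs_le]
  constructor
  · calc -c = ∑ z', q z' * -c := (hmass _).symm
      _ ≤ _ := sum_le_sum fun z' _ =>
        mul_le_mul_of_nonneg_left (by linarith [hg z' z]) (hq0 z')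
  · calc _ ≤ ∑ z', q z' * c := sum_le_sum fun z' _ =>
        mul_le_mul_of_nonneg_left (hg z z') (hq0 z')
      _ = c := hmass c

def HasBoundedDiff {m : ℕ} (c : ℝ) (f : (Fin m → Z) → ℝ) : Prop :=
  ∀ S i z, f (Function.update S i z) - f S ≤ c

/-- Condition on the first sample point: the conditional mean moves by at most `c` (Hoeffding's
lemma) and the remaining deviation is handled by induction. -/
lemma sampleExpect_exp_le (hq0 : ∀ z, 0 ≤ q z) (hq1 : ∑ z, q z = 1) {c : ℝ} (hc : 0 < c)
    (t : ℝ) : ∀ {m : ℕ} {f : (Fin m → Z) → ℝ}, HasBoundedDiff c f →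
      sampleExpect m q (fun S => exp (t * (f S - sampleExpect m q f))) ≤
        exp (m * (t ^ 2 * c ^ 2 / 2))
  | 0, f, _ => by simp [sampleExpect]
  | m + 1, f, hf => by
    set g : Z → ℝ := fun z => sampleExpect m q (fun T => f (Fin.cons z T))
    have hslice (z : Z) : HasBoundedDiff c (fun T => f (Fin.cons z T)) := fun T i z' => by
      simpa only [Fin.cons_update] using hf (Fin.cons z T) i.succ z'
    have hg (z z' : Z) : g z - g z' ≤ c := by
      rw [← sampleExpect_sub, ← sampleExpect_const (m := m) hq1 c]
      refine sampleExpect_mono hq0 fun T => ?_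
      simpa only [Fin.update_cons_zero] using hf (Fin.cons z' T) 0 z
    have hcentred : ∑ z, q z * (g z - ∑ z', q z' * g z') = 0 := by
      simp only [mul_sub, sum_sub_distrib, ← sum_mul, hq1, one_mul, sub_self]
    rw [sampleExpect_succ, sampleExpect_succ]
    calc ∑ z, q z * sampleExpect m q (fun T => exp (t * (f (Fin.cons z T) - ∑ z', q z' * g z')))
        = ∑ z, q z * exp (t * (g z - ∑ z', q z' * g z')) *
            sampleExpect m q (fun T => exp (t * (f (Fin.cons z T) - g z))) := by
          refine sum_congr rfl fun z _ => ?_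
          rw [mul_assoc]
          congr 1
          rw [← sampleExpect_const_mul]
          congr 1
          funext T
          rw [← exp_add]
          ring_nf
      _ ≤ ∑ z, q z * exp (t * (g z - ∑ z', q z' * g z')) * exp (m * (t ^ 2 * c ^ 2 / 2)) :=
          sum_le_sum fun z _ => mul_le_mul_of_nonneg_left
            (sampleExpect_exp_le hq0 hq1 hc t (hslice z)) (mul_nonneg (hq0 z) (exp_nonneg _))
      _ ≤ exp (t ^ 2 * c ^ 2 / 2) * exp (m * (t ^ 2 * c ^ 2 / 2)) := by
          rw [← sum_mul]
          exact mul_le_mul_of_nonneg_right (sum_mul_exp_le_of_abs_le hq0 hq1 hc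
            (abs_sub_sum_mul_le hq0 hq1 hg) hcentred t) (exp_nonneg _)
      _ = exp ((m + 1 : ℕ) * (t ^ 2 * c ^ 2 / 2)) := by
          rw [← exp_add]
          push_cast
          ring_nf

/-- McDiarmid's inequality. -/
lemma sampleProb_lt_le_of_hasBoundedDiff (hq0 : ∀ z, 0 ≤ q z) (hq1 : ∑ z, q z = 1) {m : ℕ}
    (hm : 0 < m) {c : ℝ} (hc : 0 < c) {f : (Fin m → Z) → ℝ} (hf : HasBoundedDiff c f)
    {s δ : ℝ} (hs : 0 ≤ s) (hδ : 0 < δ) (hsδ : 2 * m * c ^ 2 * log (1 / δ) ≤ s ^ 2) :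
    sampleProb m q (fun S => sampleExpect m q f + s < f S) ≤ δ := by
  set t := s / (m * c ^ 2) with ht_def
  have ht : 0 ≤ t := by positivity
  calc sampleProb m q (fun S => sampleExpect m q f + s < f S)
      ≤ sampleExpect m q (fun S => exp (-(t * s)) * exp (t * (f S - sampleExpect m q f))) := by
        refine sampleProb_le_sampleExpect hq0 (fun S => by positivity) fun S hS => ?_
        rw [← exp_add]
        exact one_le_exp (by nlinarith)
    _ = exp (-(t * s)) * sampleExpect m q (fun S => exp (t * (f S - sampleExpect m q f))) :=
        sampleExpect_const_mul _ _
    _ ≤ exp (-(t * s)) * exp (m * (t ^ 2 * c ^ 2 / 2)) :=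
        mul_le_mul_of_nonneg_left (sampleExpect_exp_le hq0 hq1 hc t hf) (exp_nonneg _)
    _ = exp (-(s ^ 2 / (2 * m * c ^ 2))) := by
        rw [← exp_add, ht_def]
        congr 1
        field_simp
        ring
    _ ≤ exp (-log (1 / δ)) := by
        gcongr
        rwa [le_div_iff₀ (by positivity), mul_comm]
    _ = δ := by rw [one_div, log_inv, neg_neg, exp_log hδ]

end Concentration

section RegularizedERM

variable {E Z : Type*} {m : ℕ} {loss : Z → E → ℝ}

noncomputable def empRisk (loss : Z → E → ℝ) (S : Fin m → Z) (w : E) : ℝ :=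
  (1 / (m : ℝ)) * ∑ i, loss (S i) w

lemma empRisk_sub_empRisk_update (S : Fin m → Z) (i : Fin m) (z : Z) (w : E) :
    empRisk loss S w - empRisk loss (Function.update S i z) w =
      1 / m * (loss (S i) w - loss z w) := by
  have herase : ∑ j ∈ univ.erase i, loss (Function.update S i z j) w =
      ∑ j ∈ univ.erase i, loss (S j) w :=
    sum_congr rfl fun j hj => by rw [Function.update_of_ne (ne_of_mem_erase hj)]
  simp only [empRisk, ← mul_sub]
  rw [← add_sum_erase univ (fun j => loss (S j) w) (mem_univ i),
    ← add_sum_erase univ (fun j => loss (Function.update S i z j) w) (mem_univ i),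
    Function.update_self, herase]
  ring

lemma convexOn_empRisk [AddCommGroup E] [Module ℝ E] (hconv : ∀ z, ConvexOn ℝ Set.univ (loss z))
    (S : Fin m → Z) : ConvexOn ℝ Set.univ (empRisk loss S) := by
  unfold empRisk
  simpa only [mul_sum] using convexOn_sum_mul univ
    (fun _ => by positivity : ∀ _ : Fin m, 0 ≤ 1 / (m : ℝ)) fun i => hconv (S i)

section Stability

variable [NormedAddCommGroup E] [InnerProductSpace ℝ E] {μ L : ℝ} {what : (Fin m → Z) → E}

/-- Uniform stability of regularized empirical risk minimization. -/
lemma norm_update_sub_le (hμ : 0 < μ) (hL : 0 ≤ L) (hconv : ∀ z, ConvexOn ℝ Set.univ (loss z))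
    (hlip : ∀ z w w', loss z w - loss z w' ≤ L * ‖w - w'‖)
    (hhat : ∀ S, IsRegMinimizer μ (empRisk loss S) (what S)) (S : Fin m → Z) (i : Fin m)
    (z : Z) : ‖what (Function.update S i z) - what S‖ ≤ L / (μ * m) := by
  set S' := Function.update S i z
  have h₁ := (convexOn_empRisk hconv S).quadratic_growth (hhat S) (what S')
  have h₂ := (convexOn_empRisk hconv S').quadratic_growth (hhat S') (what S)
  have hlip₁ := hlip (S i) (what S') (what S)
  have hlip₂ := hlip z (what S) (what S')
  rw [norm_sub_rev] at h₂ hlip₂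
  -- the empirical risks of `S` and `S'` differ only through the replaced point
  have hgap₁ := empRisk_sub_empRisk_update (loss := loss) S i z (what S)
  have hgap₂ := empRisk_sub_empRisk_update (loss := loss) S i z (what S')
  have hkey : μ * ‖what S' - what S‖ ^ 2 ≤ 1 / m * (L * ‖what S' - what S‖) := by
    have hm : 0 ≤ 1 / (m : ℝ) := by positivity
    nlinarith
  have hd0 := norm_nonneg (what S' - what S)
  generalize ‖what S' - what S‖ = d at hkey hd0 ⊢
  rcases hd0.eq_or_lt with rfl | hd
  · positivity
  · have h : μ * d ≤ L / m := le_of_mul_le_mul_right (by linear_combination hkey) hd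
    rw [mul_comm μ, ← div_div, le_div_iff₀ hμ]
    linarith

end Stability

variable [Fintype Z] {q : Z → ℝ}

noncomputable def popRisk (loss : Z → E → ℝ) (q : Z → ℝ) (w : E) : ℝ :=
  ∑ z, q z * loss z w

lemma convexOn_popRisk [AddCommGroup E] [Module ℝ E] (hq0 : ∀ z, 0 ≤ q z)
    (hconv : ∀ z, ConvexOn ℝ Set.univ (loss z)) : ConvexOn ℝ Set.univ (popRisk loss q) :=
  convexOn_sum_mul univ hq0 hconv

lemma sampleExpect_empRisk (hq1 : ∑ z, q z = 1) (hm : 0 < m) (w : E) :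
    sampleExpect m q (fun S => empRisk loss S w) = popRisk loss q w := by
  simp only [empRisk, sampleExpect_const_mul, sampleExpect_sum,
    sampleExpect_apply hq1 _ (loss · w), sum_const, card_univ, Fintype.card_fin, nsmul_eq_mul,
    popRisk]
  field_simp

/-- Uniform stability bounds the expected generalization gap. -/
lemma sampleExpect_popRisk_sub_empRisk_le (hq0 : ∀ z, 0 ≤ q z) (hq1 : ∑ z, q z = 1)
    (hm : 0 < m) {what : (Fin m → Z) → E} {β : ℝ}
    (hstab : ∀ S i z, loss (S i) (what (Function.update S i z)) - loss (S i) (what S) ≤ β) :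
    sampleExpect m q (fun S => popRisk loss q (what S) - empRisk loss S (what S)) ≤ β := by
  have hm' : (m : ℝ) ≠ 0 := by positivity
  have hgap (S : Fin m → Z) : popRisk loss q (what S) - empRisk loss S (what S) =
      1 / m * ∑ i, (∑ z, q z * loss z (what S) - ∑ z, q z * loss (S i) (what S)) := by
    simp only [popRisk, empRisk, ← sum_mul, hq1, one_mul, sum_sub_distrib, sum_const, card_univ,
      Fintype.card_fin, nsmul_eq_mul]
    field_simp
  have hi (i : Fin m) : sampleExpect m q
      (fun S => ∑ z, q z * loss z (what S) - ∑ z, q z * loss (S i) (what S)) ≤ β := by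
    rw [sampleExpect_sub, sampleExpect_sum_update i (fun S z => loss z (what S)),
      ← sampleExpect_sub, ← sampleExpect_const (m := m) hq1 β]
    refine sampleExpect_mono hq0 fun S => ?_
    calc ∑ z, q z * loss (S i) (what (Function.update S i z)) - ∑ z, q z * loss (S i) (what S)
        ≤ ∑ z, q z * β := by
          rw [← sum_sub_distrib]
          refine sum_le_sum fun z _ => ?_
          rw [← mul_sub]
          exact mul_le_mul_of_nonneg_left (hstab S i z) (hq0 z)
      _ = β := by rw [← sum_mul, hq1, one_mul]
  simp only [hgap, sampleExpect_const_mul, sampleExpect_sum]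
  calc 1 / (m : ℝ) * ∑ i, sampleExpect m q
        (fun S => ∑ z, q z * loss z (what S) - ∑ z, q z * loss (S i) (what S))
      ≤ 1 / m * ∑ _i : Fin m, β := by gcongr with i; exact hi i
    _ = β := by
        rw [sum_const, card_univ, Fintype.card_fin, nsmul_eq_mul]
        field_simp

variable [NormedAddCommGroup E] [InnerProductSpace ℝ E] {μ L : ℝ} {what : (Fin m → Z) → E}

lemma sampleExpect_sq_norm_sub_le (hq0 : ∀ z, 0 ≤ q z) (hq1 : ∑ z, q z = 1) (hm : 0 < m)
    (hμ : 0 < μ) (hL : 0 ≤ L) (hconv : ∀ z, ConvexOn ℝ Set.univ (loss z))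
    (hlip : ∀ z w w', loss z w - loss z w' ≤ L * ‖w - w'‖)
    (hhat : ∀ S, IsRegMinimizer μ (empRisk loss S) (what S)) {wstar : E}
    (hstar : IsRegMinimizer μ (popRisk loss q) wstar) :
    sampleExpect m q (fun S => ‖what S - wstar‖ ^ 2) ≤ L ^ 2 / (2 * μ ^ 2 * m) := by
  have hkey (S : Fin m → Z) : 2 * μ * ‖what S - wstar‖ ^ 2 ≤
      (empRisk loss S wstar - popRisk loss q wstar) +
        (popRisk loss q (what S) - empRisk loss S (what S)) := by
    have h₁ := (convexOn_empRisk hconv S).quadratic_growth (hhat S) wstar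
    have h₂ := (convexOn_popRisk hq0 hconv).quadratic_growth hstar (what S)
    rw [norm_sub_rev] at h₁
    linarith
  have hgen : sampleExpect m q (fun S => popRisk loss q (what S) - empRisk loss S (what S)) ≤
      L ^ 2 / (μ * m) := by
    refine (sampleExpect_popRisk_sub_empRisk_le hq0 hq1 hm fun S i z => (hlip (S i) _ _).trans
      (mul_le_mul_of_nonneg_left (norm_update_sub_le hμ hL hconv hlip hhat S i z) hL)).trans_eq ?_
    ring
  have hunbiased :
      sampleExpect m q (fun S => empRisk loss S wstar - popRisk loss q wstar) = 0 := by
    rw [sampleExpect_sub, sampleExpect_empRisk hq1 hm, sampleExpect_const hq1, sub_self]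
  have hmain := sampleExpect_mono hq0 hkey
  rw [sampleExpect_const_mul, sampleExpect_add, hunbiased, zero_add] at hmain
  have h := (le_div_iff₀ (by positivity : (0 : ℝ) < μ * m)).1 (hmain.trans hgen)
  rw [le_div_iff₀ (by positivity)]
  nlinarith

lemma sampleProb_norm_sub_lt_le (hq0 : ∀ z, 0 ≤ q z) (hq1 : ∑ z, q z = 1) (hm : 0 < m)
    (hμ : 0 < μ) (hL : 0 < L) (hconv : ∀ z, ConvexOn ℝ Set.univ (loss z))
    (hlip : ∀ z w w', loss z w - loss z w' ≤ L * ‖w - w'‖)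
    (hhat : ∀ S, IsRegMinimizer μ (empRisk loss S) (what S)) {wstar : E}
    (hstar : IsRegMinimizer μ (popRisk loss q) wstar) {δ : ℝ} (hδ : 0 < δ) :
    sampleProb m q (fun S => L / (μ * √m) * (1 + √2 * √(log (1 / δ))) < ‖what S - wstar‖) ≤
      δ := by
  have hm' : (0 : ℝ) < m := by exact_mod_cast hm
  set f : (Fin m → Z) → ℝ := fun S => ‖what S - wstar‖
  have hf : HasBoundedDiff (L / (μ * m)) f := fun S i z =>
    (norm_sub_norm_le _ _).trans <| by
      rw [sub_sub_sub_cancel_right]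
      exact norm_update_sub_le hμ hL.le hconv hlip hhat S i z
  have hmean : sampleExpect m q f ≤ L / (μ * √m) := by
    refine le_of_abs_le (abs_le_of_sq_le_sq ((sq_sampleExpect_le hq0 hq1 f).trans
      ((sampleExpect_sq_norm_sub_le hq0 hq1 hm hμ hL.le hconv hlip hhat hstar).trans ?_))
      (by positivity))
    rw [div_pow, mul_pow, sq_sqrt hm'.le]
    gcongr
    linarith [pow_pos hμ 2]
  set s := L / (μ * √m) * (√2 * √(log (1 / δ)))
  refine (sampleProb_mono hq0 fun S hS => ?_).trans (sampleProb_lt_le_of_hasBoundedDiff hq0 hq1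
    hm (by positivity) hf (s := s) (by positivity) hδ ?_)
  · show sampleExpect m q f + s < f S
    linarith [mul_add (L / (μ * √m)) 1 (√2 * √(log (1 / δ)))]
  · rw [mul_pow, mul_pow, sq_sqrt zero_le_two, sq_sqrt', div_pow, div_pow, mul_pow, mul_pow,
      sq_sqrt hm'.le]
    have hlog := le_max_left (log (1 / δ)) 0
    field_simp
    nlinarith

end RegularizedERM

section CondMaxent

variable {X : Type*} {p N : ℕ} (Φ : X × Fin p → EuclideanSpace ℝ (Fin N))

lemma condMaxent_pos (w : EuclideanSpace ℝ (Fin N)) (v : X × Fin p) : 0 < condMaxent Φ w v :=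
  div_pos (exp_pos _) (sum_pos (fun _ _ => exp_pos _) ⟨v.2, mem_univ _⟩)

lemma sum_condMaxent [NeZero p] (w : EuclideanSpace ℝ (Fin N)) (x : X) :
    ∑ k, condMaxent Φ w (x, k) = 1 := by
  simp only [condMaxent, ← sum_div]
  exact div_self (sum_pos (fun _ _ => exp_pos _) univ_nonempty).ne'

lemma log_condMaxent (w : EuclideanSpace ℝ (Fin N)) (v : X × Fin p) :
    log (condMaxent Φ w v) = ⟪w, Φ v⟫ - log (∑ j, exp ⟪w, Φ (v.1, j)⟫) := by
  rw [condMaxent, log_div (exp_pos _).ne' (sum_pos (fun _ _ => exp_pos _) ⟨v.2, mem_univ _⟩).ne',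
    log_exp]

lemma convexOn_neg_log_condMaxent (v : X × Fin p) :
    ConvexOn ℝ Set.univ (fun w => -log (condMaxent Φ w v)) := by
  have : Nonempty (Fin p) := ⟨v.2⟩
  have hlin : ConcaveOn ℝ Set.univ fun w : EuclideanSpace ℝ (Fin N) => ⟪w, Φ v⟫ :=
    ⟨convex_univ, fun _ _ _ _ a b _ _ _ => by simp [inner_add_left, real_inner_smul_left]⟩
  simp only [log_condMaxent, neg_sub]
  exact (convexOn_log_sum_exp_inner fun j => Φ (v.1, j)).sub hlin

variable {Φ} {r : ℝ}

lemma log_condMaxent_sub_le (hΦ : ∀ v, ‖Φ v‖ ≤ r) (w w' : EuclideanSpace ℝ (Fin N))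
    (v : X × Fin p) : log (condMaxent Φ w v) - log (condMaxent Φ w' v) ≤ 2 * r * ‖w - w'‖ := by
  have : Nonempty (Fin p) := ⟨v.2⟩
  have hinner (u u' a : EuclideanSpace ℝ (Fin N)) (ha : ‖a‖ ≤ r) :
      ⟪u, a⟫ - ⟪u', a⟫ ≤ r * ‖u - u'‖ := by
    rw [← inner_sub_left, mul_comm]
    exact (real_inner_le_norm _ _).trans (mul_le_mul_of_nonneg_left ha (norm_nonneg _))
  have hlse := log_sum_exp_sub_le fun j => hinner w' w (Φ (v.1, j)) (hΦ _)
  rw [norm_sub_rev] at hlse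
  rw [log_condMaxent, log_condMaxent]
  linarith [hinner w w' (Φ v) (hΦ v)]

lemma condMaxent_le_exp_mul (hΦ : ∀ v, ‖Φ v‖ ≤ r) (w w' : EuclideanSpace ℝ (Fin N))
    (v : X × Fin p) : condMaxent Φ w v ≤ exp (2 * r * ‖w - w'‖) * condMaxent Φ w' v := by
  rw [← log_le_log_iff (condMaxent_pos Φ w v) (by positivity [condMaxent_pos Φ w' v]),
    log_mul (exp_pos _).ne' (condMaxent_pos Φ w' v).ne', log_exp]
  linarith [log_condMaxent_sub_le hΦ w w' v]

lemma sampleProb_norm_sub_lt_le_of_condMaxent [Fintype X] (hr : 0 < r) (hΦ : ∀ v, ‖Φ v‖ ≤ r)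
    {μ : ℝ} (hμ : 0 < μ) {m : ℕ} (hm : 0 < m) {q : X × Fin p → ℝ} (hq0 : ∀ v, 0 ≤ q v)
    (hq1 : ∑ v, q v = 1) {wstar : EuclideanSpace ℝ (Fin N)}
    (hstar : ∀ w, μ * ‖wstar‖ ^ 2 - ∑ v, q v * log (condMaxent Φ wstar v) ≤
      μ * ‖w‖ ^ 2 - ∑ v, q v * log (condMaxent Φ w v))
    {what : (Fin m → X × Fin p) → EuclideanSpace ℝ (Fin N)}
    (hhat : ∀ S w, μ * ‖what S‖ ^ 2 - (1 / (m : ℝ)) * ∑ i, log (condMaxent Φ (what S) (S i)) ≤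
      μ * ‖w‖ ^ 2 - (1 / (m : ℝ)) * ∑ i, log (condMaxent Φ w (S i)))
    {δ : ℝ} (hδ : 0 < δ) :
    sampleProb m q
      (fun S => 3 * √2 * r / (μ * √m) * (1 + √(log (1 / δ))) < ‖what S - wstar‖) ≤ δ := by
  have hlip (v : X × Fin p) (w w' : EuclideanSpace ℝ (Fin N)) :
      -log (condMaxent Φ w v) - -log (condMaxent Φ w' v) ≤ 2 * r * ‖w - w'‖ := by
    rw [norm_sub_rev]
    linarith [log_condMaxent_sub_le hΦ w' w v]
  have hhat' (S : Fin m → X × Fin p) :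
      IsRegMinimizer μ (empRisk (fun v w => -log (condMaxent Φ w v)) S) (what S) := fun w => by
    simpa only [empRisk, sum_neg_distrib, mul_neg, ← sub_eq_add_neg] using hhat S w
  have hstar' : IsRegMinimizer μ (popRisk (fun v w => -log (condMaxent Φ w v)) q) wstar :=
    fun w => by simpa only [popRisk, mul_neg, sum_neg_distrib, ← sub_eq_add_neg] using hstar w
  have hradius : 2 * r / (μ * √m) * (1 + √2 * √(log (1 / δ))) ≤
      3 * √2 * r / (μ * √m) * (1 + √(log (1 / δ))) := by
    have hs := sqrt_nonneg (log (1 / δ))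
    calc 2 * r / (μ * √m) * (1 + √2 * √(log (1 / δ)))
        = r / (μ * √m) * (2 + 2 * √2 * √(log (1 / δ))) := by ring
      _ ≤ r / (μ * √m) * (3 * √2 + 3 * √2 * √(log (1 / δ))) :=
          mul_le_mul_of_nonneg_left (by nlinarith [one_lt_sqrt_two, mul_nonneg (sqrt_nonneg 2) hs])
            (by positivity)
      _ = 3 * √2 * r / (μ * √m) * (1 + √(log (1 / δ))) := by ring
  exact (sampleProb_mono hq0 fun S hS => hradius.trans_lt hS).trans
    (sampleProb_norm_sub_lt_le hq0 hq1 hm hμ (by positivity) (convexOn_neg_log_condMaxent Φ)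
      hlip hhat' hstar' hδ)

end CondMaxent

section DomainAdaptation

variable {X Y : Type*} {p : ℕ} {Dm : Fin p → X → ℝ} {C : X → Y → ℝ} {ℓ : ℝ → Y → ℝ}

/-- `Dm k x / ∑ j, Dm j x` is the source posterior `Q(k|x)`. -/
lemma mixture_mul_loss_le (hDm : ∀ k x, 0 < Dm k x) (hC : ∀ x y, 0 ≤ C x y)
    (hconv : ∀ y, ConvexOn ℝ Set.univ fun t => ℓ t y) (hℓ0 : ∀ t y, 0 ≤ ℓ t y)
    (h : Fin p → X → ℝ) {W : Fin p → X → ℝ} (hW0 : ∀ k x, 0 ≤ W k x) (hW1 : ∀ x, ∑ k, W k x = 1)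
    {B : ℝ} (hWB : ∀ k x, W k x ≤ B * (Dm k x / ∑ j, Dm j x)) {lam : Fin p → ℝ}
    (hlam : lam ∈ stdSimplex ℝ (Fin p)) (x : X) (y : Y) :
    (∑ k, lam k * (Dm k x * C x y)) * ℓ (∑ k, W k x * h k x) y ≤
      B * ∑ k, Dm k x * C x y * ℓ (h k x) y := by
  set DT := ∑ k, lam k * (Dm k x * C x y)
  have hDT0 : 0 ≤ DT :=
    sum_nonneg fun k _ => mul_nonneg (hlam.1 k) (mul_nonneg (hDm k x).le (hC x y))
  have hDT : DT ≤ (∑ j, Dm j x) * C x y := by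
    rw [sum_mul]
    refine sum_le_sum fun k _ => mul_le_of_le_one_left (mul_nonneg (hDm k x).le (hC x y)) ?_
    exact hlam.2 ▸ single_le_sum (fun j _ => hlam.1 j) (mem_univ k)
  have hjensen : ℓ (∑ k, W k x * h k x) y ≤ ∑ k, W k x * ℓ (h k x) y := by
    simpa only [smul_eq_mul] using (hconv y).map_sum_le (t := univ) (w := fun k => W k x)
      (p := fun k => h k x) (fun k _ => hW0 k x) (hW1 x) (fun k _ => Set.mem_univ _)
  have hweight (k : Fin p) : DT * W k x ≤ B * (Dm k x * C x y) := by
    have hsum : 0 < ∑ j, Dm j x := sum_pos (fun j _ => hDm j x) ⟨k, mem_univ _⟩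
    calc DT * W k x ≤ (∑ j, Dm j x) * C x y * (B * (Dm k x / ∑ j, Dm j x)) :=
          mul_le_mul hDT (hWB k x) (hW0 k x) (by positivity [hC x y])
      _ = B * (Dm k x * C x y) := by field_simp
  calc DT * ℓ (∑ k, W k x * h k x) y ≤ DT * ∑ k, W k x * ℓ (h k x) y :=
        mul_le_mul_of_nonneg_left hjensen hDT0
    _ = ∑ k, DT * W k x * ℓ (h k x) y := by
        rw [mul_sum]
        simp only [mul_assoc]
    _ ≤ ∑ k, B * (Dm k x * C x y) * ℓ (h k x) y :=
        sum_le_sum fun k _ => mul_le_mul_of_nonneg_right (hweight k) (hℓ0 _ _)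
    _ = B * ∑ k, Dm k x * C x y * ℓ (h k x) y := by
        rw [mul_sum]
        simp only [mul_assoc]

variable [Fintype X] [Fintype Y]

lemma weightedComb_const {W : Fin p → X → ℝ} (h : Fin p → X → ℝ) {c : ℝ} (hc : c ≠ 0) {x : X}
    (hW : ∑ k, W k x = 1) : weightedComb W h (fun _ => c) x = ∑ k, W k x * h k x := by
  simp only [weightedComb, ← mul_sum, hW, mul_one]
  exact sum_congr rfl fun k _ => by rw [mul_div_cancel_left₀ _ hc]

lemma expLoss_nonneg (hℓ0 : ∀ t y, 0 ≤ ℓ t y) {D : X × Y → ℝ}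
    (hD : ∀ v, 0 ≤ D v) (g : X → ℝ) : 0 ≤ expLoss ℓ D g :=
  sum_nonneg fun v _ => mul_nonneg (hD v) (hℓ0 _ _)

lemma expLoss_mixture_le (hDm : ∀ k x, 0 < Dm k x) (hC : ∀ x y, 0 ≤ C x y)
    (hconv : ∀ y, ConvexOn ℝ Set.univ fun t => ℓ t y) (hℓ0 : ∀ t y, 0 ≤ ℓ t y)
    (h : Fin p → X → ℝ) {W : Fin p → X → ℝ} (hW0 : ∀ k x, 0 ≤ W k x) (hW1 : ∀ x, ∑ k, W k x = 1)
    {B : ℝ} (hWB : ∀ k x, W k x ≤ B * (Dm k x / ∑ j, Dm j x)) {lam : Fin p → ℝ}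
    (hlam : lam ∈ stdSimplex ℝ (Fin p)) :
    expLoss ℓ (fun v => ∑ k, lam k * (Dm k v.1 * C v.1 v.2)) (fun x => ∑ k, W k x * h k x) ≤
      B * ∑ k, expLoss ℓ (fun v => Dm k v.1 * C v.1 v.2) (h k) :=
  calc expLoss ℓ (fun v => ∑ k, lam k * (Dm k v.1 * C v.1 v.2)) (fun x => ∑ k, W k x * h k x)
      ≤ ∑ v : X × Y, B * ∑ k, Dm k v.1 * C v.1 v.2 * ℓ (h k v.1) v.2 := sum_le_sum fun v _ =>
        mixture_mul_loss_le hDm hC hconv hℓ0 h hW0 hW1 hWB hlam v.1 v.2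
    _ = B * ∑ k, expLoss ℓ (fun v => Dm k v.1 * C v.1 v.2) (h k) := by
        rw [← mul_sum, sum_comm]
        rfl

variable {N : ℕ} {Φ : X × Fin p → EuclideanSpace ℝ (Fin N)}

lemma condMaxent_le_exp_mul_iSup_mul (hDm : ∀ k x, 0 < Dm k x) {r : ℝ} (hr : 0 ≤ r)
    (hΦ : ∀ v, ‖Φ v‖ ≤ r) {w wstar : EuclideanSpace ℝ (Fin N)} {ρ : ℝ} (hw : ‖w - wstar‖ ≤ ρ)
    (k : Fin p) (x : X) :
    condMaxent Φ w (x, k) ≤ exp (2 * r * ρ) *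
      (⨆ x : X, ⨆ k : Fin p, condMaxent Φ wstar (x, k) / (Dm k x / ∑ j, Dm j x)) *
      (Dm k x / ∑ j, Dm j x) := by
  have hQ : 0 < Dm k x / ∑ j, Dm j x :=
    div_pos (hDm k x) (sum_pos (fun j _ => hDm j x) ⟨k, mem_univ _⟩)
  have hratio : condMaxent Φ wstar (x, k) / (Dm k x / ∑ j, Dm j x) ≤
      ⨆ x : X, ⨆ k : Fin p, condMaxent Φ wstar (x, k) / (Dm k x / ∑ j, Dm j x) :=
    le_ciSup_of_le (Set.finite_range _).bddAbove x
      (le_ciSup (f := fun k => condMaxent Φ wstar (x, k) / (Dm k x / ∑ j, Dm j x))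
        (Set.finite_range _).bddAbove k)
  calc condMaxent Φ w (x, k) ≤ exp (2 * r * ‖w - wstar‖) * condMaxent Φ wstar (x, k) :=
        condMaxent_le_exp_mul hΦ w wstar (x, k)
    _ ≤ exp (2 * r * ρ) *
        ((⨆ x : X, ⨆ k : Fin p, condMaxent Φ wstar (x, k) / (Dm k x / ∑ j, Dm j x)) *
          (Dm k x / ∑ j, Dm j x)) := by
        gcongr
        · exact (condMaxent_pos Φ wstar (x, k)).le
        · exact (div_le_iff₀ hQ).1 hratio
    _ = _ := by ring

variable [NeZero p]

lemma one_le_iSup_sq_iSup_div_condMaxent [Nonempty X] (hDm : ∀ k x, 0 < Dm k x)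
    (wstar : EuclideanSpace ℝ (Fin N)) :
    1 ≤ ⨆ x : X, (⨆ k : Fin p, (Dm k x / ∑ j, Dm j x) / condMaxent Φ wstar (x, k)) ^ 2 := by
  obtain ⟨x⟩ := ‹Nonempty X›
  have hsum : ∑ k, condMaxent Φ wstar (x, k) ≤ ∑ k, Dm k x / ∑ j, Dm j x := by
    rw [sum_condMaxent, ← sum_div, div_self (sum_pos (fun j _ => hDm j x) univ_nonempty).ne']
  exact (one_le_pow₀ (one_le_iSup_div (fun k => condMaxent_pos Φ wstar (x, k)) hsum)).trans
    (le_ciSup (f := fun x => (⨆ k : Fin p, (Dm k x / ∑ j, Dm j x) / condMaxent Φ wstar (x, k)) ^ 2)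
      (Set.finite_range _).bddAbove x)

lemma expLoss_weightedComb_condMaxent_le [Nonempty X] (hDm : ∀ k x, 0 < Dm k x)
    (hC : ∀ x y, 0 ≤ C x y) (hconv : ∀ y, ConvexOn ℝ Set.univ fun t => ℓ t y)
    (hℓ0 : ∀ t y, 0 ≤ ℓ t y) {ε : ℝ} {h : Fin p → X → ℝ}
    (hacc : ∀ k, expLoss ℓ (fun v => Dm k v.1 * C v.1 v.2) (h k) ≤ ε) {r : ℝ} (hr : 0 ≤ r)
    (hΦ : ∀ v, ‖Φ v‖ ≤ r) {w wstar : EuclideanSpace ℝ (Fin N)} {ρ : ℝ} (hw : ‖w - wstar‖ ≤ ρ)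
    {lam : Fin p → ℝ} (hlam : lam ∈ stdSimplex ℝ (Fin p)) :
    expLoss ℓ (fun v : X × Y => ∑ k, lam k * (Dm k v.1 * C v.1 v.2))
        (weightedComb (fun k x => condMaxent Φ w (x, k)) h (fun _ => 1 / (p : ℝ))) ≤
      ε * p * exp (2 * r * ρ) *
        (⨆ x : X, ⨆ k : Fin p, condMaxent Φ wstar (x, k) / (Dm k x / ∑ j, Dm j x)) *
        (⨆ x : X, (⨆ k : Fin p, (Dm k x / ∑ j, Dm j x) / condMaxent Φ wstar (x, k)) ^ 2) := by
  set dstar := ⨆ x : X, ⨆ k : Fin p, condMaxent Φ wstar (x, k) / (Dm k x / ∑ j, Dm j x)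
  have hdstar0 : 0 ≤ dstar := iSup_nonneg fun x => iSup_nonneg fun k =>
    (div_pos (condMaxent_pos Φ wstar (x, k))
      (div_pos (hDm k x) (sum_pos (fun j _ => hDm j x) univ_nonempty))).le
  have hε : 0 ≤ ε :=
    (expLoss_nonneg hℓ0 (fun v => mul_nonneg (hDm 0 v.1).le (hC v.1 v.2)) _).trans (hacc 0)
  have hcomb : weightedComb (fun k x => condMaxent Φ w (x, k)) h (fun _ => 1 / (p : ℝ)) =
      fun x => ∑ k, condMaxent Φ w (x, k) * h k x :=
    funext fun x => weightedComb_const h (by simp [NeZero.ne p]) (sum_condMaxent Φ w x)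
  rw [hcomb]
  calc _ ≤ exp (2 * r * ρ) * dstar * ∑ k, expLoss ℓ (fun v => Dm k v.1 * C v.1 v.2) (h k) :=
        expLoss_mixture_le hDm hC hconv hℓ0 h (fun k x => (condMaxent_pos Φ w (x, k)).le)
          (sum_condMaxent Φ w) (fun k x => condMaxent_le_exp_mul_iSup_mul hDm hr hΦ hw k x) hlam
    _ ≤ exp (2 * r * ρ) * dstar * ∑ _k : Fin p, ε := by
        gcongr with k
        exact hacc k
    _ = ε * p * exp (2 * r * ρ) * dstar := by
        rw [sum_const, card_univ, Fintype.card_fin, nsmul_eq_mul]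
        ring
    _ ≤ _ := le_mul_of_one_le_right (by positivity) (one_le_iSup_sq_iSup_div_condMaxent hDm wstar)

end DomainAdaptation

end DMSA

open DMSA in
theorem dmsa_condMaxent_finite_sample_general {X Y : Type*} [Fintype X] [Nonempty X] [Fintype Y]
    {p N : ℕ} [NeZero p]
    -- true source marginals and common conditional probability
    (Dm : Fin p → X → ℝ) (hDmpos : ∀ k x, 0 < Dm k x) (hDmsum : ∀ k, ∑ x, Dm k x = 1)
    (C : X → Y → ℝ) (hCpos : ∀ x y, 0 < C x y)
    -- loss function: convex, continuous, nonnegative, bounded by M on the predictors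
    (ℓ : ℝ → Y → ℝ)
    (hconv : ∀ y, ConvexOn ℝ Set.univ fun t => ℓ t y)
    (hℓ0 : ∀ t y, 0 ≤ ℓ t y)
    -- source predictors, each ε-accurate on its own domain, with loss bounded by M
    (ε : ℝ) (h : Fin p → X → ℝ)
    (hacc : ∀ k, expLoss ℓ (fun v => Dm k v.1 * C v.1 v.2) (h k) ≤ ε)
    -- conditional Maxent: feature map, regularization, sample size
    (Φ : X × Fin p → EuclideanSpace ℝ (Fin N))
    (r : ℝ) (hr : 0 < r) (hΦ : ∀ v, ‖Φ v‖ ≤ r)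
    (μ : ℝ) (hμ : 0 < μ) (m : ℕ) (hm : 0 < m)
    -- population solution of the conditional Maxent problem
    (wstar : EuclideanSpace ℝ (Fin N))
    (hstar : ∀ w : EuclideanSpace ℝ (Fin N),
      μ * ‖wstar‖ ^ 2
          - ∑ v : X × Fin p, (1 / (p : ℝ)) * Dm v.2 v.1 * Real.log (condMaxent Φ wstar v) ≤
        μ * ‖w‖ ^ 2
          - ∑ v : X × Fin p, (1 / (p : ℝ)) * Dm v.2 v.1 * Real.log (condMaxent Φ w v))
    -- empirical solution on each sample of size m
    (what : (Fin m → X × Fin p) → EuclideanSpace ℝ (Fin N))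
    (hhat : ∀ (S : Fin m → X × Fin p) (w : EuclideanSpace ℝ (Fin N)),
      μ * ‖what S‖ ^ 2 - (1 / (m : ℝ)) * ∑ i, Real.log (condMaxent Φ (what S) (S i)) ≤
        μ * ‖w‖ ^ 2 - (1 / (m : ℝ)) * ∑ i, Real.log (condMaxent Φ w (S i))) :
    ∃ z ∈ stdSimplex ℝ (Fin p), ∀ δ > 0,
      sampleProb m (fun v : X × Fin p => (1 / (p : ℝ)) * Dm v.2 v.1)
        (fun S => ∀ lam ∈ stdSimplex ℝ (Fin p),
          expLoss ℓ (fun v : X × Y => ∑ k, lam k * (Dm k v.1 * C v.1 v.2))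
              (weightedComb (fun k x => condMaxent Φ (what S) (x, k)) h z) ≤
            ε * p *
              Real.exp (6 * Real.sqrt 2 * r ^ 2 / (μ * Real.sqrt m) *
                (1 + Real.sqrt (Real.log (1 / δ)))) *
              (⨆ x : X, ⨆ k : Fin p,
                condMaxent Φ wstar (x, k) / (Dm k x / ∑ j, Dm j x)) *
              (⨆ x : X, (⨆ k : Fin p,
                (Dm k x / ∑ j, Dm j x) / condMaxent Φ wstar (x, k)) ^ 2)) ≥
        1 - δ := by
  have hq0 (v : X × Fin p) : 0 ≤ (1 / (p : ℝ)) * Dm v.2 v.1 :=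
    mul_nonneg (by positivity) (hDmpos v.2 v.1).le
  have hq1 : ∑ v : X × Fin p, (1 / (p : ℝ)) * Dm v.2 v.1 = 1 := by
    simp only [Fintype.sum_prod_type_right, ← mul_sum, hDmsum, mul_one, sum_const, card_univ,
      Fintype.card_fin, nsmul_eq_mul]
    field_simp [NeZero.ne p]
  refine ⟨fun _ => 1 / p, ⟨fun _ => by positivity, by simp [NeZero.ne p]⟩, fun δ hδ => ?_⟩
  set ρ := 3 * √2 * r / (μ * √m) * (1 + √(log (1 / δ)))
  have htail := sampleProb_norm_sub_lt_le_of_condMaxent hr hΦ hμ hm hq0 hq1 hstar hhat hδ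
  refine le_trans ?_ (one_sub_sampleProb_le hq0 hq1 (B := fun S => ρ < ‖what S - wstar‖)
    fun S hS lam hlam => ?_)
  · linarith
  have hdet := expLoss_weightedComb_condMaxent_le hDmpos (fun x y => (hCpos x y).le) hconv hℓ0
    hacc hr.le hΦ (not_lt.1 hS) hlam
  convert hdet using 5
  ring

/-- DMSA finite-sample guarantee with conditional Maxent (Theorem 5): there is a
`z` in the simplex such that for any `δ > 0`, with probability at least `1 − δ`
over the i.i.d. sample of size `m` from `Q(x, k) = (1/p) D_k(x)` used to train
conditional Maxent, the discriminative predictor `ĝ_z`, built from the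
estimates `Q̂(k|x) = p_ŵ[k|x]`, satisfies, for every target mixture `D_T` of
the source distributions,
`L(D_T, ĝ_z) ≤ ε p exp((6√2 r²)/(μ√m)(1 + √(log(1/δ)))) d* d'*`, with
`d* = sup_x d_∞(Q*[·|x] ‖ Q(·|x))` and `d'* = sup_x d_∞(Q(·|x) ‖ Q*[·|x])²`,
where `Q*(·|x) = p_{w*}[·|x]` is the population conditional Maxent solution. -/
theorem dmsa_condMaxent_finite_sample {X Y : Type*} [Fintype X] [Nonempty X] [Fintype Y]
    {p N : ℕ} [NeZero p]
    -- true source marginals and common conditional probability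
    (Dm : Fin p → X → ℝ) (hDmpos : ∀ k x, 0 < Dm k x) (hDmsum : ∀ k, ∑ x, Dm k x = 1)
    (C : X → Y → ℝ) (hCpos : ∀ x y, 0 < C x y) (hCsum : ∀ x, ∑ y, C x y = 1)
    -- loss function: convex, continuous, nonnegative, bounded by M on the predictors
    (ℓ : ℝ → Y → ℝ) (M : ℝ) (hM : 0 < M)
    (hconv : ∀ y, ConvexOn ℝ Set.univ fun t => ℓ t y)
    (hcont : ∀ y, Continuous fun t => ℓ t y)
    (hℓ0 : ∀ t y, 0 ≤ ℓ t y)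
    -- source predictors, each ε-accurate on its own domain, with loss bounded by M
    (ε : ℝ) (h : Fin p → X → ℝ)
    (hbound : ∀ k x y, ℓ (h k x) y ≤ M)
    (hacc : ∀ k, expLoss ℓ (fun v => Dm k v.1 * C v.1 v.2) (h k) ≤ ε)
    -- conditional Maxent: feature map, regularization, sample size
    (Φ : X × Fin p → EuclideanSpace ℝ (Fin N))
    (r : ℝ) (hr : 0 < r) (hΦ : ∀ v, ‖Φ v‖ ≤ r)
    (μ : ℝ) (hμ : 0 < μ) (m : ℕ) (hm : 0 < m)
    -- population solution of the conditional Maxent problem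
    (wstar : EuclideanSpace ℝ (Fin N))
    (hstar : ∀ w : EuclideanSpace ℝ (Fin N),
      μ * ‖wstar‖ ^ 2
          - ∑ v : X × Fin p, (1 / (p : ℝ)) * Dm v.2 v.1 * Real.log (condMaxent Φ wstar v) ≤
        μ * ‖w‖ ^ 2
          - ∑ v : X × Fin p, (1 / (p : ℝ)) * Dm v.2 v.1 * Real.log (condMaxent Φ w v))
    -- empirical solution on each sample of size m
    (what : (Fin m → X × Fin p) → EuclideanSpace ℝ (Fin N))
    (hhat : ∀ (S : Fin m → X × Fin p) (w : EuclideanSpace ℝ (Fin N)),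
      μ * ‖what S‖ ^ 2 - (1 / (m : ℝ)) * ∑ i, Real.log (condMaxent Φ (what S) (S i)) ≤
        μ * ‖w‖ ^ 2 - (1 / (m : ℝ)) * ∑ i, Real.log (condMaxent Φ w (S i))) :
    ∃ z ∈ stdSimplex ℝ (Fin p), ∀ δ > 0,
      sampleProb m (fun v : X × Fin p => (1 / (p : ℝ)) * Dm v.2 v.1)
        (fun S => ∀ lam ∈ stdSimplex ℝ (Fin p),
          expLoss ℓ (fun v : X × Y => ∑ k, lam k * (Dm k v.1 * C v.1 v.2))
              (weightedComb (fun k x => condMaxent Φ (what S) (x, k)) h z) ≤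
            ε * p *
              Real.exp (6 * Real.sqrt 2 * r ^ 2 / (μ * Real.sqrt m) *
                (1 + Real.sqrt (Real.log (1 / δ)))) *
              (⨆ x : X, ⨆ k : Fin p,
                condMaxent Φ wstar (x, k) / (Dm k x / ∑ j, Dm j x)) *
              (⨆ x : X, (⨆ k : Fin p,
                (Dm k x / ∑ j, Dm j x) / condMaxent Φ wstar (x, k)) ^ 2)) ≥
        1 - δ :=
  dmsa_condMaxent_finite_sample_general Dm hDmpos hDmsum C hCpos ℓ hconv hℓ0 ε h hacc Φ r hr hΦ μ hμ
    m hm wstar hstar what hhat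
end

section
/- Lipschitz continuity of the log conditional Maxent probabilities in the parameter: if Φ : X × [p] → ℝ^N satisfies ‖Φ(x, k)‖ ≤ r for all (x, k), then for any w, w' ∈ ℝ^N and any (x, k) ∈ X × [p], | log p_w[k | x] − log p_{w'}[k | x] | ≤ 2r ‖w − w'‖. -/
open scoped BigOperators RealInnerProductSpace

lemma logsumexp_lip {X : Type*} {p N : ℕ} [NeZero p]
    (Φ : X × Fin p → EuclideanSpace ℝ (Fin N))
    (r : ℝ) (hΦ : ∀ v, ‖Φ v‖ ≤ r)
    (u u' : EuclideanSpace ℝ (Fin N)) (x : X) :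
    Real.log (∑ j, Real.exp ⟪u, Φ (x, j)⟫) -
      Real.log (∑ j, Real.exp ⟪u', Φ (x, j)⟫) ≤ r * ‖u - u'‖ := by
  have hS' : (0:ℝ) < ∑ j, Real.exp ⟪u', Φ (x, j)⟫ :=
    Finset.sum_pos (fun j _ => Real.exp_pos _) ⟨⟨0, Nat.pos_of_ne_zero (NeZero.ne p)⟩, Finset.mem_univ _⟩
  have key : (∑ j, Real.exp ⟪u, Φ (x, j)⟫) ≤
      (∑ j, Real.exp ⟪u', Φ (x, j)⟫) * Real.exp (r * ‖u - u'‖) := by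
    rw [Finset.sum_mul]
    refine Finset.sum_le_sum fun j _ => ?_
    rw [← Real.exp_add]
    refine Real.exp_le_exp.2 ?_
    have h1 : ⟪u, Φ (x, j)⟫ - ⟪u', Φ (x, j)⟫ = ⟪u - u', Φ (x, j)⟫ := by
      rw [inner_sub_left]
    have h2 : ⟪u - u', Φ (x, j)⟫ ≤ ‖u - u'‖ * ‖Φ (x, j)‖ :=
      real_inner_le_norm _ _
    have h3 : ‖u - u'‖ * ‖Φ (x, j)‖ ≤ ‖u - u'‖ * r :=
      mul_le_mul_of_nonneg_left (hΦ _) (norm_nonneg _)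
    nlinarith
  have hle : Real.log (∑ j, Real.exp ⟪u, Φ (x, j)⟫) ≤
      Real.log ((∑ j, Real.exp ⟪u', Φ (x, j)⟫) * Real.exp (r * ‖u - u'‖)) :=
    Real.log_le_log (Finset.sum_pos (fun j _ => Real.exp_pos _)
      ⟨⟨0, Nat.pos_of_ne_zero (NeZero.ne p)⟩, Finset.mem_univ _⟩) key
  rw [Real.log_mul hS'.ne' (Real.exp_ne_zero _), Real.log_exp] at hle
  linarith

/-- Lipschitz continuity of the log conditional Maxent probabilities in the
parameter: if `‖Φ(x, k)‖ ≤ r` for all `(x, k)`, then for any `w, w'` and any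
`(x, k)`, `|log p_w[k|x] − log p_{w'}[k|x]| ≤ 2 r ‖w − w'‖`. -/
theorem log_condMaxent_lipschitz {X : Type*} {p N : ℕ} [NeZero p]
    (Φ : X × Fin p → EuclideanSpace ℝ (Fin N))
    (r : ℝ) (hr : 0 < r) (hΦ : ∀ v, ‖Φ v‖ ≤ r)
    (w w' : EuclideanSpace ℝ (Fin N)) (x : X) (k : Fin p) :
    |Real.log (condMaxent Φ w (x, k)) - Real.log (condMaxent Φ w' (x, k))| ≤
      2 * r * ‖w - w'‖ := by
  have hSpos : ∀ u : EuclideanSpace ℝ (Fin N),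
      (0:ℝ) < ∑ j, Real.exp ⟪u, Φ (x, j)⟫ := fun u =>
    Finset.sum_pos (fun j _ => Real.exp_pos _) ⟨⟨0, Nat.pos_of_ne_zero (NeZero.ne p)⟩, Finset.mem_univ _⟩
  have hlog : ∀ u : EuclideanSpace ℝ (Fin N),
      Real.log (condMaxent Φ u (x, k)) =
        ⟪u, Φ (x, k)⟫ - Real.log (∑ j, Real.exp ⟪u, Φ (x, j)⟫) := by
    intro u
    rw [condMaxent, Real.log_div (Real.exp_ne_zero _) (hSpos u).ne', Real.log_exp]
  rw [hlog w, hlog w']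
  have hinner : |⟪w, Φ (x, k)⟫ - ⟪w', Φ (x, k)⟫| ≤ r * ‖w - w'‖ := by
    rw [← inner_sub_left]
    calc |⟪w - w', Φ (x, k)⟫| ≤ ‖w - w'‖ * ‖Φ (x, k)‖ := abs_real_inner_le_norm _ _
      _ ≤ ‖w - w'‖ * r := mul_le_mul_of_nonneg_left (hΦ _) (norm_nonneg _)
      _ = r * ‖w - w'‖ := mul_comm _ _
  have h1 := logsumexp_lip Φ r hΦ w w' x
  have h2 := logsumexp_lip Φ r hΦ w' w x
  rw [norm_sub_rev w' w] at h2
  have := abs_le.1 hinner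
  rw [abs_le]
  constructor <;> nlinarith [this.1, this.2]
end
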